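/- Let (G,m) be a summable weighted graph and let f ∈ L²(G,m) be a nonzero function. Define h(f) as the infimum of the Cheeger ratios h(S) = m(∂S)/m(S) over all nonempty subsets S of the support {v ∈ V : f(v) ≠ 0}. Then the Rayleigh quotient of f satisfies 1 − √(1 − h(f)²) ≤ ⟨Δf,f⟩/⟨f,f⟩ ≤ 1 + √(1 − h(f)²). (Here h(f) ∈ [0,1], so the square root is real.) -/

import Mathlib

/-!
With `N = ∑ m(v) f(v)²` and `T = ∑ m(u,v) f(u) f(v)` one has `⟨f, f⟩ = N` and `⟨Δf, f⟩ = N - T`,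
so it suffices to show `T² ≤ (1 - h(f)²) N²`. The level sets `S_t = {f² > t}`, `t ≥ 0`, lie in the
support of `f`, so `h(f) m(S_t) ≤ m(∂S_t)`. Integrating over `t` (co-area) gives
`h(f) N ≤ ½ ∑ m(u,v) |f(u)² - f(v)²|`, and since `|f(u)² - f(v)²| = |f(u) - f(v)| |f(u) + f(v)|`,
Cauchy–Schwarz bounds the right side by
`½ √(∑ m(u,v) (f(u) - f(v))²) √(∑ m(u,v) (f(u) + f(v))²) = √(N - T) √(N + T)`.
-/

open MeasureTheory

/-- A summable weighted graph on a vertex set `V`. -/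
structure SummableWeightedGraph (V : Type*) where
  m : V → V → ℝ
  symm : ∀ u v, m u v = m v u
  nonneg : ∀ u v, 0 ≤ m u v
  loopless : ∀ v, m v v = 0
  summable : Summable fun p : V × V => m p.1 p.2
  noIsolated : ∀ v, 0 < ∑' u, m v u

namespace SummableWeightedGraph

variable {V : Type*} (G : SummableWeightedGraph V)

/-- The weight of a vertex. -/
noncomputable def deg (v : V) : ℝ := ∑' u, G.m v u

/-- The weight of a set of vertices. -/
noncomputable def setWeight (S : Set V) : ℝ := ∑' v : S, G.deg v

/-- The weight of the boundary of a set of vertices. -/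
noncomputable def boundaryWeight (S : Set V) : ℝ :=
  ∑' p : ↥S × ↥Sᶜ, G.m p.1 p.2

/-- The Cheeger constant. -/
noncomputable def cheegerConst : ℝ :=
  sInf { r : ℝ | ∃ S : Set V, S.Nonempty ∧ G.setWeight S ≤ G.setWeight Sᶜ ∧
    r = G.boundaryWeight S / G.setWeight S }

/-- The weighted counting measure on vertices. -/
noncomputable def measure [MeasurableSpace V] : Measure V :=
  Measure.sum fun v => ENNReal.ofReal (G.deg v) • Measure.dirac v

/-- The normalised Laplacian, characterised by its pointwise formula. -/
def IsLaplacian [MeasurableSpace V]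
    (L : Lp ℝ 2 G.measure →L[ℝ] Lp ℝ 2 G.measure) : Prop :=
  ∀ f : Lp ℝ 2 G.measure, ∀ᵐ v ∂G.measure,
    L f v = f v - (G.deg v)⁻¹ * ∑' u, G.m v u * f u

end SummableWeightedGraph

open Set
open scoped ENNReal RealInnerProductSpace

lemma lintegral_Ici_tsum_indicator_Ico {ι : Type*} [Countable ι] (w : ι → ℝ≥0∞)
    {a : ι → ℝ} (b : ι → ℝ) (ha : ∀ i, 0 ≤ a i) :
    ∫⁻ t in Ici 0, ∑' i, (Ico (a i) (b i)).indicator (fun _ => w i) t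
      = ∑' i, w i * ENNReal.ofReal (b i - a i) := by
  rw [lintegral_tsum fun i => (measurable_const.indicator measurableSet_Ico).aemeasurable]
  refine tsum_congr fun i => ?_
  rw [lintegral_indicator measurableSet_Ico, setLIntegral_const,
    Measure.restrict_apply measurableSet_Ico,
    inter_eq_left.mpr (Ico_subset_Ici_self.trans (Ici_subset_Ici.mpr (ha i))), Real.volume_Ico]

lemma ENNReal.ofReal_add_ofReal_neg (x : ℝ) :
    ENNReal.ofReal x + ENNReal.ofReal (-x) = ENNReal.ofReal |x| := by
  rcases le_total 0 x with hx | hx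
  · rw [ENNReal.ofReal_of_nonpos (neg_nonpos.mpr hx), add_zero, abs_of_nonneg hx]
  · rw [ENNReal.ofReal_of_nonpos hx, zero_add, abs_of_nonpos hx]

lemma tsum_mul_abs_mul_le_sqrt_mul_sqrt {ι : Type*} {w x y : ι → ℝ} (hw : ∀ i, 0 ≤ w i)
    (hx : Summable fun i => w i * x i ^ 2) (hy : Summable fun i => w i * y i ^ 2) :
    ∑' i, w i * |x i * y i|
      ≤ √(∑' i, w i * x i ^ 2) * √(∑' i, w i * y i ^ 2) := by
  have hsq : ∀ (z : ι → ℝ) (i : ι), (√(w i) * |z i|) ^ (2 : ℝ) = w i * z i ^ 2 := fun z i => by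
    rw [Real.rpow_two, mul_pow, Real.sq_sqrt (hw i), sq_abs]
  have holder := Real.inner_le_Lp_mul_Lq_tsum_of_nonneg Real.HolderConjugate.two_two
    (f := fun i => √(w i) * |x i|) (g := fun i => √(w i) * |y i|)
    (fun i => by positivity) (fun i => by positivity)
    (by simpa only [hsq] using hx) (by simpa only [hsq] using hy)
  simp only [hsq, ← Real.sqrt_eq_rpow] at holder
  refine (tsum_congr fun i => ?_).trans_le holder
  rw [abs_mul, mul_mul_mul_comm, Real.mul_self_sqrt (hw i)]

lemma one_sub_sqrt_le_div_and_div_le_one_add_sqrt {N T h : ℝ} (hN : 0 < N)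
    (hNT : (h * N) ^ 2 ≤ N ^ 2 - T ^ 2) :
    1 - √(1 - h ^ 2) ≤ (N - T) / N ∧ (N - T) / N ≤ 1 + √(1 - h ^ 2) := by
  have hT : |T / N| ≤ √(1 - h ^ 2) := by
    refine Real.abs_le_sqrt ?_
    rw [div_pow, div_le_iff₀ (by positivity)]
    linarith
  rw [sub_div, div_self hN.ne']
  constructor <;> linarith [abs_le.mp hT]

namespace SummableWeightedGraph

variable {V : Type*} (G : SummableWeightedGraph V)

noncomputable def normSq (F : V → ℝ) : ℝ := ∑' v, G.deg v * F v ^ 2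

noncomputable def adjForm (F : V → ℝ) : ℝ := ∑' p : V × V, G.m p.1 p.2 * (F p.1 * F p.2)

/-- `h(f)` of the theorem is `cheegerConstOn` of the support of `f`. -/
noncomputable def cheegerConstOn (T : Set V) : ℝ :=
  sInf {r : ℝ | ∃ S : Set V, S.Nonempty ∧ S ⊆ T ∧ r = G.boundaryWeight S / G.setWeight S}

lemma deg_pos (v : V) : 0 < G.deg v := G.noIsolated v

lemma summable_deg : Summable G.deg :=
  ((summable_prod_of_nonneg fun p => G.nonneg p.1 p.2).mp G.summable).2

lemma setWeight_pos {S : Set V} (hS : S.Nonempty) : 0 < G.setWeight S := by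
  obtain ⟨v, hv⟩ := hS
  exact (G.deg_pos v).trans_le <|
    (G.summable_deg.subtype S).le_tsum ⟨v, hv⟩ fun _ _ => (G.deg_pos _).le

lemma boundaryWeight_nonneg (S : Set V) : 0 ≤ G.boundaryWeight S :=
  tsum_nonneg fun _ => G.nonneg _ _

lemma cheegerConstOn_nonneg (T : Set V) : 0 ≤ G.cheegerConstOn T :=
  Real.sInf_nonneg fun _ ⟨S, hS, _, hr⟩ =>
    hr ▸ div_nonneg (G.boundaryWeight_nonneg S) (G.setWeight_pos hS).le

lemma cheegerConstOn_mul_setWeight_le {S T : Set V} (hS : S.Nonempty) (hST : S ⊆ T) :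
    G.cheegerConstOn T * G.setWeight S ≤ G.boundaryWeight S := by
  have hbdd : BddBelow {r : ℝ | ∃ S : Set V, S.Nonempty ∧ S ⊆ T ∧
      r = G.boundaryWeight S / G.setWeight S} :=
    ⟨0, fun _ ⟨S, hS, _, hr⟩ =>
      hr ▸ div_nonneg (G.boundaryWeight_nonneg S) (G.setWeight_pos hS).le⟩
  rw [← le_div_iff₀ (G.setWeight_pos hS)]
  exact csInf_le hbdd ⟨S, hS, hST, rfl⟩

lemma normSq_nonneg (F : V → ℝ) : 0 ≤ G.normSq F :=
  tsum_nonneg fun v => mul_nonneg (G.deg_pos v).le (sq_nonneg _)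

section

variable {G} {F : V → ℝ}

lemma hasSum_mul_sq_fst (hF : Summable fun v => G.deg v * F v ^ 2) :
    HasSum (fun p : V × V => G.m p.1 p.2 * F p.1 ^ 2) (G.normSq F) := by
  have hrow : ∀ v, HasSum (fun u => G.m v u * F v ^ 2) (G.deg v * F v ^ 2) := fun v =>
    (G.summable.prod_factor v).hasSum.mul_right _
  have hsum : Summable fun p : V × V => G.m p.1 p.2 * F p.1 ^ 2 :=
    (summable_prod_of_nonneg fun p => mul_nonneg (G.nonneg _ _) (sq_nonneg _)).mpr
      ⟨fun v => (hrow v).summable, hF.congr fun v => (hrow v).tsum_eq.symm⟩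
  convert hsum.hasSum using 1
  exact (hsum.tsum_prod.trans (tsum_congr fun v => (hrow v).tsum_eq)).symm

lemma hasSum_mul_sq_snd (hF : Summable fun v => G.deg v * F v ^ 2) :
    HasSum (fun p : V × V => G.m p.1 p.2 * F p.2 ^ 2) (G.normSq F) := by
  convert (Equiv.prodComm V V).hasSum_iff.mpr (hasSum_mul_sq_fst hF) using 2 with p
  simp only [Function.comp_apply, Equiv.prodComm_apply, Prod.fst_swap, Prod.snd_swap, G.symm]

lemma summable_mul_mul (hF : Summable fun v => G.deg v * F v ^ 2) :
    Summable fun p : V × V => G.m p.1 p.2 * (F p.1 * F p.2) := by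
  refine ((hasSum_mul_sq_fst hF).add (hasSum_mul_sq_snd hF)).summable.of_norm_bounded
    fun p => ?_
  rw [Real.norm_eq_abs, abs_mul, abs_of_nonneg (G.nonneg _ _), ← mul_add]
  refine mul_le_mul_of_nonneg_left (abs_le.mpr ⟨?_, ?_⟩) (G.nonneg _ _) <;>
    nlinarith [sq_nonneg (F p.1 + F p.2), sq_nonneg (F p.1 - F p.2)]

lemma hasSum_mul_add_sq (hF : Summable fun v => G.deg v * F v ^ 2) (s : ℝ) :
    HasSum (fun p : V × V => G.m p.1 p.2 * (F p.1 + s * F p.2) ^ 2)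
      ((1 + s ^ 2) * G.normSq F + 2 * s * G.adjForm F) := by
  have h := ((hasSum_mul_sq_fst hF).add ((hasSum_mul_sq_snd hF).mul_left (s ^ 2))).add
    ((summable_mul_mul hF).hasSum.mul_left (2 * s))
  convert h using 1
  · exact funext fun p => by ring
  · rw [adjForm]; ring

lemma summable_mul_abs_sub_sq (hF : Summable fun v => G.deg v * F v ^ 2) :
    Summable fun p : V × V => G.m p.1 p.2 * |F p.1 ^ 2 - F p.2 ^ 2| := by
  refine ((hasSum_mul_sq_fst hF).add (hasSum_mul_sq_snd hF)).summable.of_nonneg_of_le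
    (fun p => mul_nonneg (G.nonneg _ _) (abs_nonneg _)) fun p => ?_
  rw [← mul_add]
  exact mul_le_mul_of_nonneg_left (abs_sub _ _ |>.trans_eq (by simp only [abs_sq]))
    (G.nonneg _ _)

end

lemma ofReal_setWeight (S : Set V) :
    ENNReal.ofReal (G.setWeight S) = ∑' v, S.indicator (fun v => ENNReal.ofReal (G.deg v)) v := by
  rw [setWeight, ENNReal.ofReal_tsum_of_nonneg (fun v : S => (G.deg_pos v).le)
    (G.summable_deg.subtype S), tsum_subtype S fun v => ENNReal.ofReal (G.deg v)]

lemma ofReal_boundaryWeight (S : Set V) :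
    ENNReal.ofReal (G.boundaryWeight S)
      = ∑' p : V × V, (S ×ˢ Sᶜ).indicator (fun p => ENNReal.ofReal (G.m p.1 p.2)) p := by
  have hsum : Summable fun p : S × ↥Sᶜ => G.m p.1 p.2 :=
    G.summable.comp_injective (Subtype.val_injective.prodMap Subtype.val_injective)
  rw [boundaryWeight, ENNReal.ofReal_tsum_of_nonneg (fun p => G.nonneg _ _) hsum,
    ← (Equiv.Set.prod S Sᶜ).tsum_eq,
    ← tsum_subtype (S ×ˢ Sᶜ) fun p : V × V => ENNReal.ofReal (G.m p.1 p.2)]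
  rfl

lemma two_mul_tsum_ofReal_mul_ofReal_sub_sq (F : V → ℝ) :
    2 * ∑' p : V × V, ENNReal.ofReal (G.m p.1 p.2) * ENNReal.ofReal (F p.1 ^ 2 - F p.2 ^ 2)
      = ∑' p : V × V, ENNReal.ofReal (G.m p.1 p.2 * |F p.1 ^ 2 - F p.2 ^ 2|) := by
  rw [two_mul]
  nth_rewrite 2 [← (Equiv.prodComm V V).tsum_eq]
  rw [← ENNReal.tsum_add]
  refine tsum_congr fun p => ?_
  simp only [Equiv.prodComm_apply, Prod.fst_swap, Prod.snd_swap, G.symm p.2 p.1]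
  rw [← mul_add, ← neg_sub (F p.1 ^ 2), ENNReal.ofReal_add_ofReal_neg,
    ENNReal.ofReal_mul (G.nonneg _ _)]

section

variable [Countable V]

lemma lintegral_ofReal_setWeight_levelSet (F : V → ℝ) :
    ∫⁻ t in Ici 0, ENNReal.ofReal (G.setWeight {v | t < F v ^ 2})
      = ∑' v, ENNReal.ofReal (G.deg v) * ENNReal.ofReal (F v ^ 2) := by
  have h := lintegral_Ici_tsum_indicator_Ico (fun v => ENNReal.ofReal (G.deg v))
    (fun v => F v ^ 2) fun _ => le_rfl
  simp only [sub_zero] at h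
  rw [← h]
  refine setLIntegral_congr_fun measurableSet_Ici fun t ht => ?_
  rw [ofReal_setWeight]
  refine tsum_congr fun v => ?_
  simp only [indicator_apply, mem_ofPred_eq, mem_Ico, mem_Ici.mp ht, true_and]

lemma lintegral_ofReal_boundaryWeight_levelSet (F : V → ℝ) :
    ∫⁻ t in Ici 0, ENNReal.ofReal (G.boundaryWeight {v | t < F v ^ 2})
      = ∑' p : V × V, ENNReal.ofReal (G.m p.1 p.2) * ENNReal.ofReal (F p.1 ^ 2 - F p.2 ^ 2) := by
  rw [← lintegral_Ici_tsum_indicator_Ico (fun p : V × V => ENNReal.ofReal (G.m p.1 p.2))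
    (fun p => F p.1 ^ 2) fun p => sq_nonneg (F p.2)]
  refine lintegral_congr fun t => ?_
  rw [ofReal_boundaryWeight]
  refine tsum_congr fun p => ?_
  simp only [indicator_apply, mem_prod, mem_compl_iff, mem_ofPred_eq, mem_Ico, not_lt, and_comm]

variable {G} {F : V → ℝ}

lemma two_mul_mul_normSq_le_tsum_mul_abs_sub_sq (hF : Summable fun v => G.deg v * F v ^ 2)
    {h : ℝ} (hh : 0 ≤ h)
    (hS : ∀ S : Set V, S.Nonempty → S ⊆ {v | F v ≠ 0} → h * G.setWeight S ≤ G.boundaryWeight S) :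
    2 * (h * G.normSq F) ≤ ∑' p : V × V, G.m p.1 p.2 * |F p.1 ^ 2 - F p.2 ^ 2| := by
  have hlevel : ∀ t ∈ Ici (0 : ℝ), ENNReal.ofReal (h * G.setWeight {v | t < F v ^ 2})
      ≤ ENNReal.ofReal (G.boundaryWeight {v | t < F v ^ 2}) := by
    intro t ht
    refine ENNReal.ofReal_le_ofReal ?_
    rcases {v | t < F v ^ 2}.eq_empty_or_nonempty with hempty | hne
    · rw [hempty, setWeight, tsum_empty, mul_zero]
      exact G.boundaryWeight_nonneg ∅
    · refine hS _ hne fun v hv hv0 => ?_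
      exact (mem_Ici.mp ht).not_gt (by simpa [hv0] using hv)
  refine (ENNReal.ofReal_le_ofReal_iff
    (tsum_nonneg fun p => mul_nonneg (G.nonneg _ _) (abs_nonneg _))).mp ?_
  calc ENNReal.ofReal (2 * (h * G.normSq F))
      = 2 * (ENNReal.ofReal h * ∫⁻ t in Ici 0, ENNReal.ofReal (G.setWeight {v | t < F v ^ 2})) := by
        rw [lintegral_ofReal_setWeight_levelSet, ENNReal.ofReal_mul zero_le_two,
          ENNReal.ofReal_ofNat, ENNReal.ofReal_mul hh, normSq,
          ENNReal.ofReal_tsum_of_nonneg (fun v => by positivity [(G.deg_pos v).le]) hF]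
        simp only [ENNReal.ofReal_mul (G.deg_pos _).le]
    _ = 2 * ∫⁻ t in Ici 0, ENNReal.ofReal (h * G.setWeight {v | t < F v ^ 2}) := by
        rw [← lintegral_const_mul' _ _ ENNReal.ofReal_ne_top]
        simp only [ENNReal.ofReal_mul hh]
    _ ≤ 2 * ∫⁻ t in Ici 0, ENNReal.ofReal (G.boundaryWeight {v | t < F v ^ 2}) := by
        gcongr 2 * ?_
        exact setLIntegral_mono' measurableSet_Ici hlevel
    _ = ENNReal.ofReal (∑' p : V × V, G.m p.1 p.2 * |F p.1 ^ 2 - F p.2 ^ 2|) := by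
        rw [lintegral_ofReal_boundaryWeight_levelSet, two_mul_tsum_ofReal_mul_ofReal_sub_sq,
          ENNReal.ofReal_tsum_of_nonneg (fun p => mul_nonneg (G.nonneg _ _) (abs_nonneg _))
            (summable_mul_abs_sub_sq hF)]

lemma sq_mul_normSq_le_normSq_sq_sub_adjForm_sq (hF : Summable fun v => G.deg v * F v ^ 2)
    {h : ℝ} (hh : 0 ≤ h)
    (hS : ∀ S : Set V, S.Nonempty → S ⊆ {v | F v ≠ 0} → h * G.setWeight S ≤ G.boundaryWeight S) :
    (h * G.normSq F) ^ 2 ≤ G.normSq F ^ 2 - G.adjForm F ^ 2 := by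
  have hsub := hasSum_mul_add_sq hF (-1)
  have hadd := hasSum_mul_add_sq hF 1
  have hCS := tsum_mul_abs_mul_le_sqrt_mul_sqrt (fun p : V × V => G.nonneg p.1 p.2)
    hsub.summable hadd.summable
  have hfactor : ∀ p : V × V, (F p.1 + -1 * F p.2) * (F p.1 + 1 * F p.2) = F p.1 ^ 2 - F p.2 ^ 2 :=
    fun p => by ring
  simp only [hfactor, hsub.tsum_eq, hadd.tsum_eq] at hCS
  have hle := (two_mul_mul_normSq_le_tsum_mul_abs_sub_sq hF hh hS).trans hCS
  have hsub0 := hsub.nonneg fun p => by positivity [G.nonneg p.1 p.2]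
  have hadd0 := hadd.nonneg fun p => by positivity [G.nonneg p.1 p.2]
  rw [← Real.sqrt_mul hsub0, Real.le_sqrt (by positivity [G.normSq_nonneg F])
    (mul_nonneg hsub0 hadd0)] at hle
  linarith

end

section

variable [MeasurableSpace V]

lemma measure_singleton_ne_zero (v : V) : G.measure {v} ≠ 0 := by
  refine (lt_of_lt_of_le ?_ (Measure.le_sum _ v {v})).ne'
  rw [Measure.smul_apply, Measure.dirac_apply_of_mem (mem_singleton v), smul_eq_mul, mul_one]
  exact ENNReal.ofReal_pos.mpr (G.deg_pos v)

lemma ae_measure_iff [Countable V] {P : V → Prop} : (∀ᵐ v ∂G.measure, P v) ↔ ∀ v, P v := by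
  simp only [ae_iff_of_countable, G.measure_singleton_ne_zero, ne_eq, not_false_eq_true,
    true_implies]

variable [MeasurableSingletonClass V]

lemma summable_deg_mul_sq (f : Lp ℝ 2 G.measure) : Summable fun v => G.deg v * f v ^ 2 := by
  have h := (L2.integrable_inner (𝕜 := ℝ) f f).summable_of_dirac
  refine h.congr fun v => ?_
  simp [ENNReal.toReal_ofReal (G.deg_pos v).le]

variable [Countable V]

lemma integral_eq_tsum (g : V → ℝ) : ∫ v, g v ∂G.measure = ∑' v, G.deg v * g v := by
  rw [measure, integral_sum_dirac fun _ => ENNReal.ofReal_ne_top]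
  simp only [ENNReal.toReal_ofReal (G.deg_pos _).le, smul_eq_mul]

lemma inner_eq_tsum (f g : Lp ℝ 2 G.measure) : ⟪f, g⟫ = ∑' v, G.deg v * (f v * g v) := by
  simp only [L2.inner_def, integral_eq_tsum, RCLike.inner_apply, Real.ringHom_apply,
    mul_comm (g _)]

lemma inner_self_eq_normSq (f : Lp ℝ 2 G.measure) : ⟪f, f⟫ = G.normSq f := by
  simp only [inner_eq_tsum, normSq, sq]

lemma inner_laplacian_self_eq {Δ : Lp ℝ 2 G.measure →L[ℝ] Lp ℝ 2 G.measure}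
    (hΔ : G.IsLaplacian Δ) (f : Lp ℝ 2 G.measure) :
    ⟪Δ f, f⟫ = G.normSq f - G.adjForm f := by
  have hF := G.summable_deg_mul_sq f
  have hT := summable_mul_mul hF
  have hΔf := G.ae_measure_iff.mp (hΔ f)
  rw [inner_eq_tsum, normSq, adjForm, hT.tsum_prod, ← hF.tsum_sub hT.prod]
  refine tsum_congr fun v => ?_
  have hrow : ∑' u, G.m v u * (f v * f u) = f v * ∑' u, G.m v u * f u := by
    rw [← tsum_mul_left]
    exact tsum_congr fun u => by ring
  rw [hΔf v, hrow]
  field_simp [(G.deg_pos v).ne']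

end

end SummableWeightedGraph

open SummableWeightedGraph in
open scoped RealInnerProductSpace in
theorem rayleigh_quotient_bounds_general {V : Type*} [MeasurableSpace V] [MeasurableSingletonClass V]
    [Countable V] (G : SummableWeightedGraph V)
    (Δ : Lp ℝ 2 G.measure →L[ℝ] Lp ℝ 2 G.measure) (hΔ : G.IsLaplacian Δ)
    (f : Lp ℝ 2 G.measure) (hf : f ≠ 0) (hc : ℝ)
    (hhc : hc = sInf { r : ℝ | ∃ S : Set V, S.Nonempty ∧ S ⊆ {v : V | f v ≠ 0} ∧
      r = G.boundaryWeight S / G.setWeight S }) :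
    1 - Real.sqrt (1 - hc ^ 2) ≤ ⟪Δ f, f⟫ / ⟪f, f⟫ ∧
    ⟪Δ f, f⟫ / ⟪f, f⟫ ≤ 1 + Real.sqrt (1 - hc ^ 2) := by
  have hN : 0 < G.normSq f := G.inner_self_eq_normSq f ▸ real_inner_self_pos.mpr hf
  have hbound : (hc * G.normSq f) ^ 2 ≤ G.normSq f ^ 2 - G.adjForm f ^ 2 := by
    subst hhc
    exact sq_mul_normSq_le_normSq_sq_sub_adjForm_sq (G.summable_deg_mul_sq f)
      (G.cheegerConstOn_nonneg _) fun S hS hSf => G.cheegerConstOn_mul_setWeight_le hS hSf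
  rw [G.inner_laplacian_self_eq hΔ, G.inner_self_eq_normSq]
  exact one_sub_sqrt_le_div_and_div_le_one_add_sqrt hN hbound

open SummableWeightedGraph in
open scoped RealInnerProductSpace in
/-- for nonzero `f`, the Rayleigh quotient satisfies
`1 - √(1 - h(f)²) ≤ ⟨Δf,f⟩/⟨f,f⟩ ≤ 1 + √(1 - h(f)²)`. -/
theorem rayleigh_quotient_bounds {V : Type*} [MeasurableSpace V] [MeasurableSingletonClass V]
    [Countable V] [Nonempty V] (G : SummableWeightedGraph V)
    (Δ : Lp ℝ 2 G.measure →L[ℝ] Lp ℝ 2 G.measure) (hΔ : G.IsLaplacian Δ)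
    (f : Lp ℝ 2 G.measure) (hf : f ≠ 0) (hc : ℝ)
    (hhc : hc = sInf { r : ℝ | ∃ S : Set V, S.Nonempty ∧ S ⊆ {v : V | f v ≠ 0} ∧
      r = G.boundaryWeight S / G.setWeight S }) :
    1 - Real.sqrt (1 - hc ^ 2) ≤ ⟪Δ f, f⟫ / ⟪f, f⟫ ∧
    ⟪Δ f, f⟫ / ⟪f, f⟫ ≤ 1 + Real.sqrt (1 - hc ^ 2) :=
  rayleigh_quotient_bounds_general G Δ hΔ f hf hc hhc
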